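/- Let λ be a Lagrangian subspace of H and let K be a compact set of orthogonal projections of H (with the operator-norm topology) such that the range of every P ∈ K is a Lagrangian subspace forming a Fredholm pair with λ. Then there exists a closed subspace W of λ, of finite codimension in λ, such that range(P) ∩ W = {0} for every P ∈ K. -/

import Mathlib

open scoped RealInnerProductSpace

/-- The annihilator of a set `μ` with respect to the symplectic form `ω(x, y) = ⟪J x, y⟫`. -/
def omegaAnn {H : Type*} [NormedAddCommGroup H] [InnerProductSpace ℝ H]
    (J : H →L[ℝ] H) (μ : Set H) : Set H :=
  {x : H | ∀ y ∈ μ, ⟪J x, y⟫ = 0}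

/-- A pair of closed subspaces is a Fredholm pair if their intersection is finite-dimensional
and their sum is closed and of finite codimension. -/
def IsFredholmPair {H : Type*} [NormedAddCommGroup H] [InnerProductSpace ℝ H]
    (μ ν : Submodule ℝ H) : Prop :=
  FiniteDimensional ℝ ↥(μ ⊓ ν) ∧ IsClosed ((μ ⊔ ν : Submodule ℝ H) : Set H) ∧
    FiniteDimensional ℝ (H ⧸ (μ ⊔ ν))

/-!
Near a fixed `P₀ ∈ K`, put `F = range P₀ ∩ λ` (finite-dimensional) and `W₀ = λ ∩ F⊥`. Then
`range P₀ ∩ W₀ = 0` and `range P₀ + W₀ = range P₀ + λ` is closed, so by the open mapping theorem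
`‖w‖ ≤ C ‖u + w‖` for `u ∈ range P₀`, `w ∈ W₀`. A vector `x = P x ∈ W₀` then satisfies
`‖x‖ ≤ C ‖(P - P₀) x‖`, forcing `x = 0` once `C ‖P - P₀‖ < 1`. Compactness of `K` leaves finitely
many `P₀`, and `W = λ ∩ (F₁ + ⋯ + Fₙ)⊥` works for all of them at once.
-/

open Filter Topology

theorem isClosed_omegaAnn {H : Type*} [NormedAddCommGroup H] [InnerProductSpace ℝ H]
    (J : H →L[ℝ] H) (s : Set H) : IsClosed (omegaAnn J s) := by
  simp only [omegaAnn, Set.ofPred_forall]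
  exact isClosed_iInter fun y => isClosed_iInter fun _ =>
    isClosed_eq (J.continuous.inner continuous_const) continuous_const

section Banach

variable {𝕜 E : Type*} [NontriviallyNormedField 𝕜] [NormedAddCommGroup E] [NormedSpace 𝕜 E]

theorem ContinuousLinearMap.range_inf_eq_bot_of_mul_norm_sub_lt {P P₀ : E →L[𝕜] E}
    (hP : IsIdempotentElem P) {W : Submodule 𝕜 E} {C : NNReal}
    (hC : ∀ u ∈ LinearMap.range (P₀ : E →ₗ[𝕜] E), ∀ w ∈ W, ‖w‖ ≤ C * ‖u + w‖)
    (hPP₀ : C * ‖P - P₀‖ < 1) :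
    LinearMap.range (P : E →ₗ[𝕜] E) ⊓ W = ⊥ := by
  refine eq_bot_iff.mpr fun x hx => ?_
  obtain ⟨hxP, hxW⟩ := Submodule.mem_inf.mp hx
  have hPx : P x = x :=
    (LinearMap.IsIdempotentElem.mem_range_iff (IsIdempotentElem.toLinearMap hP)).mp hxP
  have hx_le : ‖x‖ ≤ C * ‖P - P₀‖ * ‖x‖ := calc
    ‖x‖ ≤ C * ‖-P₀ x + x‖ := hC _ (neg_mem (LinearMap.mem_range_self _ x)) x hxW
    _ = C * ‖(P - P₀) x‖ := by rw [sub_apply, hPx, neg_add_eq_sub]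
    _ ≤ C * ‖P - P₀‖ * ‖x‖ := by
      rw [mul_assoc]; exact mul_le_mul_of_nonneg_left ((P - P₀).le_opNorm x) C.2
  rw [Submodule.mem_bot, ← norm_le_zero_iff]
  nlinarith [norm_nonneg x]

variable [CompleteSpace E]

theorem Submodule.exists_norm_le_mul_norm_add_of_isClosed_sup {μ W : Submodule 𝕜 E}
    (hμ : IsClosed (μ : Set E)) (hW : IsClosed (W : Set E)) (hμW : Disjoint μ W)
    (hsup : IsClosed ((μ ⊔ W : Submodule 𝕜 E) : Set E)) :
    ∃ C : NNReal, ∀ u ∈ μ, ∀ w ∈ W, ‖w‖ ≤ C * ‖u + w‖ := by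
  have := hμ.completeSpace_coe
  have := hW.completeSpace_coe
  let f : μ × W →L[𝕜] E := μ.subtypeL.coprod W.subtypeL
  have hinj : Function.Injective f := by
    change Function.Injective (μ.subtype.coprod W.subtype)
    rw [← LinearMap.ker_eq_bot, LinearMap.ker_coprod_of_disjoint_range _ _
      (by rwa [Submodule.range_subtype, Submodule.range_subtype]), Submodule.ker_subtype,
      Submodule.ker_subtype, Submodule.prod_bot]
  have hrange : Set.range f = μ ⊔ W := by
    change Set.range (μ.subtype.coprod W.subtype) = _
    rw [← LinearMap.coe_range, ← Submodule.sup_eq_range]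
  obtain ⟨C, hC⟩ := f.antilipschitz_of_injective_of_isClosed_range hinj (hrange ▸ hsup)
  refine ⟨C, fun u hu w hw => (norm_snd_le ((⟨u, hu⟩, ⟨w, hw⟩) : μ × W)).trans ?_⟩
  exact f.bound_of_antilipschitz hC _

theorem ContinuousLinearMap.eventually_range_inf_eq_bot {P₀ : E →L[𝕜] E}
    (hP₀ : IsIdempotentElem P₀) {W : Submodule 𝕜 E} (hW : IsClosed (W : Set E))
    (hP₀W : Disjoint (LinearMap.range (P₀ : E →ₗ[𝕜] E)) W)
    (hsup : IsClosed ((LinearMap.range (P₀ : E →ₗ[𝕜] E) ⊔ W : Submodule 𝕜 E) : Set E)) :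
    ∀ᶠ P : E →L[𝕜] E in 𝓝 P₀, IsIdempotentElem P → LinearMap.range (P : E →ₗ[𝕜] E) ⊓ W = ⊥ := by
  obtain ⟨C, hC⟩ := Submodule.exists_norm_le_mul_norm_add_of_isClosed_sup
    (ContinuousLinearMap.IsIdempotentElem.isClosed_range hP₀) hW hP₀W hsup
  have hlim : Tendsto (fun P : E →L[𝕜] E => (C : ℝ) * ‖P - P₀‖) (𝓝 P₀) (𝓝 0) := by
    have hcont : Continuous fun P : E →L[𝕜] E => (C : ℝ) * ‖P - P₀‖ := by fun_prop
    simpa using hcont.tendsto P₀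
  filter_upwards [hlim.eventually_lt_const one_pos] with P hP hidem
  exact range_inf_eq_bot_of_mul_norm_sub_lt hidem hC hP

end Banach

section InnerProduct

variable {𝕜 E : Type*} [RCLike 𝕜] [NormedAddCommGroup E] [InnerProductSpace 𝕜 E]

theorem Submodule.disjoint_inf_orthogonal_inf (μ lam : Submodule 𝕜 E) :
    Disjoint μ (lam ⊓ (μ ⊓ lam)ᗮ) := by
  rw [disjoint_iff, ← inf_assoc]
  exact (μ ⊓ lam).inf_orthogonal_eq_bot

theorem Submodule.sup_inf_orthogonal_inf_eq_sup (μ lam : Submodule 𝕜 E)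
    [(μ ⊓ lam).HasOrthogonalProjection] : μ ⊔ (lam ⊓ (μ ⊓ lam)ᗮ) = μ ⊔ lam := by
  conv_rhs => rw [← sup_orthogonal_inf_of_hasOrthogonalProjection (inf_le_right : μ ⊓ lam ≤ lam)]
  rw [← sup_assoc, sup_inf_self, inf_comm lam]

theorem Submodule.finiteDimensional_quotient_comap_inf_orthogonal (lam G : Submodule 𝕜 E)
    [FiniteDimensional 𝕜 G] : FiniteDimensional 𝕜 (lam ⧸ (lam ⊓ Gᗮ).comap lam.subtype) := by
  have hker : LinearMap.ker (Gᗮ.mkQ ∘ₗ lam.subtype) = (lam ⊓ Gᗮ).comap lam.subtype := by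
    rw [LinearMap.ker_comp, ker_mkQ, comap_inf, comap_subtype_self, top_inf_eq]
  have : FiniteDimensional 𝕜 (E ⧸ Gᗮ) :=
    (quotientEquivOfIsCompl Gᗮ G (isCompl_orthogonal G).symm).symm.finiteDimensional
  exact hker ▸ (LinearMap.quotKerEquivRange (Gᗮ.mkQ ∘ₗ lam.subtype)).symm.finiteDimensional

end InnerProduct

theorem compact_family_admits_common_finite_codim_complement_general
    {H : Type*} [NormedAddCommGroup H] [InnerProductSpace ℝ H] [CompleteSpace H]
    (J : H →L[ℝ] H)
    (lam : Submodule ℝ H) (hlam : omegaAnn J (lam : Set H) = (lam : Set H))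
    (K : Set (H →L[ℝ] H)) (hK : IsCompact K)
    (hKproj : ∀ P ∈ K, (∀ x y : H, ⟪P x, y⟫ = ⟪x, P y⟫) ∧ P.comp P = P ∧
      omegaAnn J (Set.range ⇑P) = Set.range ⇑P ∧
      IsFredholmPair (LinearMap.range (P : H →ₗ[ℝ] H)) lam) :
    ∃ W : Submodule ℝ H, W ≤ lam ∧ IsClosed (W : Set H) ∧
      FiniteDimensional ℝ (↥lam ⧸ (W.comap lam.subtype)) ∧
      ∀ P ∈ K, LinearMap.range (P : H →ₗ[ℝ] H) ⊓ W = ⊥ := by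
  let F (P : H →L[ℝ] H) : Submodule ℝ H := LinearMap.range (P : H →ₗ[ℝ] H) ⊓ lam
  have hF (P : K) : FiniteDimensional ℝ (F P) := (hKproj P P.2).2.2.2.1
  have hlamc : IsClosed (lam : Set H) := hlam ▸ isClosed_omegaAnn J _
  have hlocal (P₀ : H →L[ℝ] H) (hP₀ : P₀ ∈ K) : ∀ᶠ P : H →L[ℝ] H in 𝓝 P₀, IsIdempotentElem P →
      LinearMap.range (P : H →ₗ[ℝ] H) ⊓ (lam ⊓ (F P₀)ᗮ) = ⊥ := by
    have := hF ⟨P₀, hP₀⟩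
    refine ContinuousLinearMap.eventually_range_inf_eq_bot (hKproj P₀ hP₀).2.1
      (hlamc.inter (F P₀).isClosed_orthogonal) (Submodule.disjoint_inf_orthogonal_inf _ _) ?_
    rw [Submodule.sup_inf_orthogonal_inf_eq_sup]
    exact (hKproj P₀ hP₀).2.2.2.2.1
  obtain ⟨t, hKt⟩ := hK.elim_nhds_subcover' _ hlocal
  let G : Submodule ℝ H := ⨆ P₀ : t, F P₀.1.1
  refine ⟨lam ⊓ Gᗮ, inf_le_left, hlamc.inter G.isClosed_orthogonal,
    Submodule.finiteDimensional_quotient_comap_inf_orthogonal lam G, fun P hP => ?_⟩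
  obtain ⟨P₀, hP₀t, hPP₀⟩ := Set.mem_iUnion₂.mp (hKt hP)
  have hGW : lam ⊓ Gᗮ ≤ lam ⊓ (F P₀)ᗮ :=
    inf_le_inf_left _ (Submodule.orthogonal_le (le_iSup (fun Q : t => F Q.1.1) ⟨P₀, hP₀t⟩))
  exact eq_bot_mono (inf_le_inf_left _ hGW) (hPP₀ (hKproj P hP).2.1)

/-- For a compact set `K` of orthogonal projections whose ranges are Lagrangians forming
Fredholm pairs with `λ`, there is a closed finite-codimensional subspace `W` of `λ` with
`range P ∩ W = {0}` for all `P ∈ K`. -/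
theorem compact_family_admits_common_finite_codim_complement
    {H : Type*} [NormedAddCommGroup H] [InnerProductSpace ℝ H] [CompleteSpace H]
    (J : H →L[ℝ] H) (hJ2 : ∀ x : H, J (J x) = -x)
    (hJorth : ∀ x y : H, ⟪J x, J y⟫ = ⟪x, y⟫)
    (lam : Submodule ℝ H) (hlam : omegaAnn J (lam : Set H) = (lam : Set H))
    (K : Set (H →L[ℝ] H)) (hK : IsCompact K)
    (hKproj : ∀ P ∈ K, (∀ x y : H, ⟪P x, y⟫ = ⟪x, P y⟫) ∧ P.comp P = P ∧
      omegaAnn J (Set.range ⇑P) = Set.range ⇑P ∧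
      IsFredholmPair (LinearMap.range (P : H →ₗ[ℝ] H)) lam) :
    ∃ W : Submodule ℝ H, W ≤ lam ∧ IsClosed (W : Set H) ∧
      FiniteDimensional ℝ (↥lam ⧸ (W.comap lam.subtype)) ∧
      ∀ P ∈ K, LinearMap.range (P : H →ₗ[ℝ] H) ⊓ W = ⊥ :=
  compact_family_admits_common_finite_codim_complement_general J lam hlam K hK hKproj
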